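/- arXiv:1411.2732 — 7 statements merged into one kernel-verified Lean document; each statement's English description precedes it below -/
import Mathlib

section
/- Let P be a probability measure on ℝ with CDF F, F⁻ its left-continuous version, and 𝐅 the primitive of F vanishing at 0. Then for every x ∈ ℝ, the subdifferential of the convex function 𝐅 at x is the interval [F⁻(x), F(x)]; i.e., ℓ ∈ ℝ satisfies ℓ·h ≤ 𝐅(x+h) - 𝐅(x) for all h ∈ ℝ if and only if F⁻(x) ≤ ℓ ≤ F(x). -/
open MeasureTheory

noncomputable def rho (τ : ℝ) (x : ℝ) : ℝ := if x ≤ 0 then (τ - 1) * x else τ * x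

noncomputable def cdf' (P : Measure ℝ) (x : ℝ) : ℝ := (P (Set.Iic x)).toReal
noncomputable def primF (P : Measure ℝ) (x : ℝ) : ℝ := ∫ u in (0:ℝ)..x, cdf' P u

open intervalIntegral Filter Topology

lemma cdf'_mono (P : Measure ℝ) [IsFiniteMeasure P] : Monotone (cdf' P) := fun a b hab =>
  ENNReal.toReal_mono (measure_ne_top P _) (measure_mono (Set.Iic_subset_Iic.2 hab))

lemma cdf'_intInt (P : Measure ℝ) [IsFiniteMeasure P] (a b : ℝ) :
    IntervalIntegrable (cdf' P) volume a b := (cdf'_mono P).intervalIntegrable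

lemma integral_le_cdf' (P : Measure ℝ) [IsFiniteMeasure P] {a b : ℝ} (hab : a ≤ b) :
    ∫ u in a..b, cdf' P u ≤ (b - a) * cdf' P b := by
  have : ∫ u in a..b, cdf' P u ≤ ∫ _u in a..b, cdf' P b :=
    integral_mono_on hab (cdf'_intInt P a b) intervalIntegrable_const
      (fun u hu => cdf'_mono P hu.2)
  simpa [mul_comm] using this

lemma cdf'_le_integral (P : Measure ℝ) [IsFiniteMeasure P] {a b : ℝ} (hab : a ≤ b) :
    (b - a) * cdf' P a ≤ ∫ u in a..b, cdf' P u := by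
  have : ∫ _u in a..b, cdf' P a ≤ ∫ u in a..b, cdf' P u :=
    integral_mono_on hab intervalIntegrable_const (cdf'_intInt P a b)
      (fun u hu => cdf'_mono P hu.1)
  simpa [mul_comm] using this

theorem stmt5 (P : Measure ℝ) [IsProbabilityMeasure P] (x : ℝ) (ℓ : ℝ) :
    (∀ h : ℝ, ℓ * h ≤ primF P (x + h) - primF P x) ↔
      (P (Set.Iio x)).toReal ≤ ℓ ∧ ℓ ≤ cdf' P x := by
  have key : ∀ h : ℝ, primF P (x + h) - primF P x = ∫ u in x..(x + h), cdf' P u := by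
    intro h
    rw [primF, primF, integral_interval_sub_left (cdf'_intInt P 0 (x + h)) (cdf'_intInt P 0 x)]
  constructor
  · intro H
    constructor
    · -- lower bound: (P (Iio x)).toReal ≤ ℓ
      have key2 : ∀ y, y < x → cdf' P y ≤ ℓ := by
        intro y hy
        have h1 := H (y - x)
        rw [key] at h1
        have hxy : x + (y - x) = y := by ring
        rw [hxy] at h1
        rw [integral_symm] at h1
        have h2 : (x - y) * cdf' P y ≤ ∫ u in y..x, cdf' P u := cdf'_le_integral P hy.le
        have h3 : (x - y) * cdf' P y ≤ ℓ * (x - y) := by nlinarith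
        have hpos : 0 < x - y := by linarith
        nlinarith
      -- Iio x = ⋃ n, Iic (x - 1/(n+1))
      have hU : Set.Iio x = ⋃ n : ℕ, Set.Iic (x - 1 / (n + 1)) := by
        ext u
        simp only [Set.mem_Iio, Set.mem_iUnion, Set.mem_Iic]
        constructor
        · intro hu
          obtain ⟨n, hn⟩ := exists_nat_one_div_lt (sub_pos.2 hu)
          exact ⟨n, by linarith⟩
        · rintro ⟨n, hn⟩
          have : (0:ℝ) < 1 / (n + 1) := by positivity
          linarith
      have hmono : Monotone (fun n : ℕ => Set.Iic (x - 1 / ((n:ℝ) + 1))) := by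
        intro m n hmn
        apply Set.Iic_subset_Iic.2
        have h1 : (1:ℝ) / (n + 1) ≤ 1 / (m + 1) := by
          apply one_div_le_one_div_of_le (by positivity)
          have : (m:ℝ) ≤ n := Nat.cast_le.2 hmn
          linarith
        linarith
      have htend := tendsto_measure_iUnion_atTop (μ := P) hmono
      rw [← hU] at htend
      have htendR : Tendsto (fun n : ℕ => (P (Set.Iic (x - 1 / ((n:ℝ) + 1)))).toReal) atTop
          (𝓝 (P (Set.Iio x)).toReal) :=
        (ENNReal.tendsto_toReal (measure_ne_top P _)).comp htend
      refine le_of_tendsto htendR (Filter.Eventually.of_forall fun n => ?_)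
      refine key2 _ ?_
      have h0 : (0:ℝ) < 1 / ((n:ℝ) + 1) := by positivity
      linarith
    · -- upper bound: ℓ ≤ cdf' P x
      have key1 : ∀ y, x < y → ℓ ≤ cdf' P y := by
        intro y hy
        have h1 := H (y - x)
        rw [key] at h1
        have hxy : x + (y - x) = y := by ring
        rw [hxy] at h1
        have h2 := integral_le_cdf' P hy.le
        have hpos : 0 < y - x := by linarith
        nlinarith
      have hI : Set.Iic x = ⋂ n : ℕ, Set.Iic (x + 1 / (n + 1)) := by
        ext u
        simp only [Set.mem_Iic, Set.mem_iInter]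
        constructor
        · intro hu n
          have : (0:ℝ) < 1 / (n + 1) := by positivity
          linarith
        · intro hu
          by_contra hne
          push_neg at hne
          obtain ⟨n, hn⟩ := exists_nat_one_div_lt (sub_pos.2 hne)
          linarith [hu n]
      have hanti : Antitone (fun n : ℕ => Set.Iic (x + 1 / ((n:ℝ) + 1))) := by
        intro m n hmn
        apply Set.Iic_subset_Iic.2
        have h1 : (1:ℝ) / (n + 1) ≤ 1 / (m + 1) := by
          apply one_div_le_one_div_of_le (by positivity)
          have : (m:ℝ) ≤ n := Nat.cast_le.2 hmn
          linarith
        linarith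
      have htend := tendsto_measure_iInter_atTop (μ := P)
        (fun n => measurableSet_Iic.nullMeasurableSet) hanti ⟨0, measure_ne_top P _⟩
      rw [← hI] at htend
      have htendR : Tendsto (fun n : ℕ => (P (Set.Iic (x + 1 / ((n:ℝ) + 1)))).toReal) atTop
          (𝓝 (cdf' P x)) :=
        (ENNReal.tendsto_toReal (measure_ne_top P _)).comp htend
      refine ge_of_tendsto htendR (Filter.Eventually.of_forall fun n => ?_)
      refine key1 _ ?_
      have h0 : (0:ℝ) < 1 / ((n:ℝ) + 1) := by positivity
      linarith
  · rintro ⟨hlo, hhi⟩ h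
    rw [key]
    rcases le_or_gt 0 h with hpos | hneg
    · -- h ≥ 0
      have hab : x ≤ x + h := by linarith
      have h2 : ∫ _u in x..(x+h), ℓ ≤ ∫ u in x..(x+h), cdf' P u :=
        integral_mono_on hab intervalIntegrable_const (cdf'_intInt P _ _)
          (fun u hu => hhi.trans (cdf'_mono P hu.1))
      simpa [mul_comm] using h2
    · -- h < 0
      have hab : x + h ≤ x := by linarith
      rw [integral_symm]
      have hae : cdf' P ≤ᵐ[volume.restrict (Set.Icc (x+h) x)] fun _ => ℓ := by
        have hne : ∀ᵐ u : ℝ ∂(volume.restrict (Set.Icc (x+h) x)), u ≠ x := by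
          refine ae_restrict_of_ae ?_
          rw [ae_iff]
          have hs : {u : ℝ | ¬ u ≠ x} = {x} := by ext u; simp [eq_comm]
          rw [hs]
          exact Real.volume_singleton
        have hmem := ae_restrict_mem (μ := volume) (measurableSet_Icc (a := x+h) (b := x))
        filter_upwards [hne, hmem] with u hu hmemu
        have hux : u < x := lt_of_le_of_ne hmemu.2 hu
        have h1 : P (Set.Iic u) ≤ P (Set.Iio x) := measure_mono (fun v hv => lt_of_le_of_lt hv hux)
        exact le_trans (ENNReal.toReal_mono (measure_ne_top P _) h1) hlo
      have h2 : ∫ u in (x+h)..x, cdf' P u ≤ ∫ _u in (x+h)..x, ℓ :=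
        integral_mono_ae_restrict hab (cdf'_intInt P _ _) intervalIntegrable_const hae
      have h3 : ∫ _u in (x+h)..(x:ℝ), ℓ = ℓ * (x - (x+h)) := by simp [mul_comm]
      rw [h3] at h2
      nlinarith
end

section
/- Let P be a probability measure on ℝ with CDF F, and let a < b be reals. Then ∫_{(a,b]} x dP(x) = b·F(b) - a·F(a) - ∫ₐᵇ F(x) dx (integration by parts on the half-open interval (a,b]). -/
open MeasureTheory

/-!
Split `x = (x - a) + a` on `(a, b]`. By the layer-cake formula, `∫_{(a,b]} (x - a) dP` is the
integral over `t ∈ (a, b)` of the tail mass `P((t, b]) = F(b) - F(t)`, which gives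
`(b - a) F(b) - ∫ₐᵇ F`; the constant part contributes `a (F(b) - F(a))`.
-/

open Set

section
variable {P : Measure ℝ} [IsFiniteMeasure P]

theorem monotone_cdf' : Monotone (cdf' P) := fun _ _ hxy =>
  measureReal_mono (Iic_subset_Iic.2 hxy)

theorem measureReal_Ioc_eq_cdf'_sub {c d : ℝ} (hcd : c ≤ d) :
    P.real (Ioc c d) = cdf' P d - cdf' P c := by
  rw [← Iic_sdiff_Iic, measureReal_sdiff (Iic_subset_Iic.2 hcd) measurableSet_Iic]
  rfl

theorem setIntegral_Ioc_sub_left_eq_intervalIntegral_measureReal_Ioc {a b : ℝ} (hab : a ≤ b) :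
    ∫ x in Ioc a b, (x - a) ∂P = ∫ t in a..b, P.real (Ioc t b) := by
  have hint : IntegrableOn (fun x => x - a) (Ioc a b) P :=
    (continuous_id.sub continuous_const).integrableOn_Icc.mono_set Ioc_subset_Icc_self
  have hnn : 0 ≤ᵐ[P.restrict (Ioc a b)] fun x => x - a := by
    filter_upwards [ae_restrict_mem measurableSet_Ioc] with x hx
    exact sub_nonneg.2 hx.1.le
  have htail : ∀ t ∈ Ioi (0 : ℝ),
      (P.restrict (Ioc a b)).real {x | t < x - a} = P.real (Ioc (a + t) b) := by
    intro t ht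
    have hset : {x : ℝ | t < x - a} = Ioi (a + t) := by
      ext x; exact (lt_sub_iff_add_lt' : t < x - a ↔ a + t < x)
    rw [hset, measureReal_restrict_apply measurableSet_Ioi, inter_comm, Ioc_inter_Ioi,
      sup_of_le_right (le_add_of_nonneg_right ht.le)]
  have hvanish : ∀ t ∈ Ioi (0 : ℝ) \ Ioc 0 (b - a), P.real (Ioc (a + t) b) = 0 := by
    rintro t ⟨ht0, htb⟩
    have : b < a + t := by
      simp only [mem_Ioi, mem_Ioc, not_and, not_le] at ht0 htb; linarith [htb ht0]
    simp [Ioc_eq_empty_of_le this.le]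
  rw [hint.integral_eq_integral_meas_lt hnn, setIntegral_congr_fun measurableSet_Ioi htail,
    setIntegral_eq_of_subset_of_forall_sdiff_eq_zero measurableSet_Ioi Ioc_subset_Ioi_self hvanish,
    ← intervalIntegral.integral_of_le (sub_nonneg.2 hab),
    intervalIntegral.integral_comp_add_left (fun s => P.real (Ioc s b)), add_zero, add_sub_cancel]

theorem intervalIntegral_measureReal_Ioc_eq {a b : ℝ} (hab : a ≤ b) :
    ∫ t in a..b, P.real (Ioc t b) = (b - a) * cdf' P b - ∫ t in a..b, cdf' P t := by
  rw [intervalIntegral.integral_congr (g := fun t => cdf' P b - cdf' P t),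
    intervalIntegral.integral_sub intervalIntegrable_const monotone_cdf'.intervalIntegrable,
    intervalIntegral.integral_const, smul_eq_mul]
  intro t ht
  rw [uIcc_of_le hab] at ht
  exact measureReal_Ioc_eq_cdf'_sub ht.2

end

theorem stmt6 (P : Measure ℝ) [IsProbabilityMeasure P] (a b : ℝ) (hab : a < b) :
    ∫ x in Set.Ioc a b, x ∂P =
      b * cdf' P b - a * cdf' P a - ∫ x in a..b, cdf' P x := by
  have hint : IntegrableOn (fun x => x - a) (Ioc a b) P :=
    (continuous_id.sub continuous_const).integrableOn_Icc.mono_set Ioc_subset_Icc_self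
  calc ∫ x in Ioc a b, x ∂P = ∫ x in Ioc a b, ((x - a) + a) ∂P := by simp
    _ = ∫ x in Ioc a b, (x - a) ∂P + P.real (Ioc a b) * a := by
      rw [integral_add hint (integrable_const a), setIntegral_const, smul_eq_mul]
    _ = _ := by
      rw [setIntegral_Ioc_sub_left_eq_intervalIntegral_measureReal_Ioc hab.le,
        intervalIntegral_measureReal_Ioc_eq hab.le, measureReal_Ioc_eq_cdf'_sub hab.le]
      ring
end

section
/- Let P be a probability measure on ℝ, τ ∈ (0,1), and q ≥ 0. Then ∫_ℝ (ρ_τ(x - q) - ρ_τ(x)) dP(x) = -τ·q + ∫_{(0,q]} F(x) dx, where F is the CDF of P. -/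
open MeasureTheory

theorem stmt7 (P : Measure ℝ) [IsProbabilityMeasure P] (τ : ℝ) (hτ : τ ∈ Set.Ioo (0:ℝ) 1)
    (q : ℝ) (hq : 0 ≤ q) :
    ∫ x, (rho τ (x - q) - rho τ x) ∂P = -τ * q + ∫ x in Set.Ioc (0:ℝ) q, cdf' P x := by
  set G : ℝ → ENNReal := fun x => volume (Set.Ioc 0 q ∩ Set.Ici x) with hG
  have hGfin : ∀ x, G x ≤ ENNReal.ofReal q := by
    intro x
    calc G x ≤ volume (Set.Ioc 0 q) := measure_mono Set.inter_subset_left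
    _ = ENNReal.ofReal q := by simp [Real.volume_Ioc]
  -- compute G pointwise
  have hGval : ∀ x, (G x).toReal = if x ≤ 0 then q else if x ≤ q then q - x else 0 := by
    intro x
    by_cases h1 : x ≤ 0
    · have : Set.Ioc 0 q ∩ Set.Ici x = Set.Ioc 0 q := by
        apply Set.inter_eq_self_of_subset_left
        intro u hu; exact le_trans h1 hu.1.le
      simp [hG, this, Real.volume_Ioc, ENNReal.toReal_ofReal hq, h1]
    · push_neg at h1
      by_cases h2 : x ≤ q
      · have : Set.Ioc 0 q ∩ Set.Ici x = Set.Icc x q := by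
          ext u
          simp only [Set.mem_inter_iff, Set.mem_Ioc, Set.mem_Ici, Set.mem_Icc]
          constructor
          · rintro ⟨⟨_, hu2⟩, hu3⟩; exact ⟨hu3, hu2⟩
          · rintro ⟨hu1, hu2⟩; exact ⟨⟨lt_of_lt_of_le h1 hu1, hu2⟩, hu1⟩
        simp [hG, this, Real.volume_Icc, ENNReal.toReal_ofReal (sub_nonneg.mpr h2),
          not_le.mpr h1, h2]
      · have : Set.Ioc 0 q ∩ Set.Ici x = ∅ := by
          ext u
          simp only [Set.mem_inter_iff, Set.mem_Ioc, Set.mem_Ici, Set.mem_empty_iff_false,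
            iff_false, not_and]
          rintro ⟨_, hu2⟩ hu3
          push_neg at h2
          exact absurd (le_trans hu3 hu2) (not_le.mpr h2)
        simp [hG, this, not_le.mpr h1, h2]
  -- pointwise identity
  have hpt : ∀ x, rho τ (x - q) - rho τ x = -(τ * q) + (G x).toReal := by
    intro x
    rw [hGval x]
    unfold rho
    by_cases h1 : x ≤ 0
    · have hxq : x - q ≤ 0 := by linarith
      simp only [h1, hxq, if_true]
      ring
    · push_neg at h1
      by_cases h2 : x ≤ q
      · have hxq : x - q ≤ 0 := by linarith
        simp only [hxq, if_true, not_le.mpr h1, if_false, h2]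
        ring
      · push_neg at h2
        have hxq : ¬ (x - q ≤ 0) := by push_neg; linarith
        simp only [hxq, if_false, not_le.mpr h1, not_le.mpr h2]
        ring
  -- G measurable (antitone)
  have hGanti : Antitone G := by
    intro a b hab
    exact measure_mono (Set.inter_subset_inter_right _ (Set.Ici_subset_Ici.mpr hab))
  have hGmeas : Measurable G := Antitone.measurable hGanti
  -- toReal G integrable
  have hint : Integrable (fun x => (G x).toReal) P := by
    apply Integrable.mono' (integrable_const q) (hGmeas.ennreal_toReal.aestronglyMeasurable)
    filter_upwards with x
    rw [Real.norm_eq_abs, abs_of_nonneg ENNReal.toReal_nonneg]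
    calc (G x).toReal ≤ (ENNReal.ofReal q).toReal :=
      ENNReal.toReal_mono (by simp) (hGfin x)
    _ = q := ENNReal.toReal_ofReal hq
  -- key Tonelli step
  have hswap : ∫⁻ x, G x ∂P = ∫⁻ u in Set.Ioc (0:ℝ) q, P (Set.Iic u) := by
    have h1 : ∀ x, G x = ∫⁻ u in Set.Ioc (0:ℝ) q, Set.indicator {p : ℝ × ℝ | p.1 ≤ p.2} 1 (x, u) := by
      intro x
      have h0 : ∀ u, Set.indicator {p : ℝ × ℝ | p.1 ≤ p.2} (1 : ℝ × ℝ → ENNReal) (x, u)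
          = Set.indicator (Set.Ici x) 1 u := by
        intro u
        by_cases h : x ≤ u <;> simp [Set.indicator_apply, h]
      simp only [h0]
      rw [lintegral_indicator measurableSet_Ici _]
      simp [hG, Measure.restrict_apply, Set.inter_comm]
    have h2 : ∀ u, (∫⁻ x, Set.indicator {p : ℝ × ℝ | p.1 ≤ p.2} 1 (x, u) ∂P) = P (Set.Iic u) := by
      intro u
      have h0 : ∀ x, Set.indicator {p : ℝ × ℝ | p.1 ≤ p.2} (1 : ℝ × ℝ → ENNReal) (x, u)
          = Set.indicator (Set.Iic u) 1 x := by
        intro x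
        by_cases h : x ≤ u <;> simp [Set.indicator_apply, h]
      simp only [h0]
      rw [lintegral_indicator measurableSet_Iic _]
      simp
    simp_rw [h1]
    rw [lintegral_lintegral_swap]
    · simp_rw [h2]
    · apply Measurable.aemeasurable
      apply Measurable.indicator measurable_const
      exact measurableSet_le measurable_fst measurable_snd
  -- assemble
  have hcdf : ∫ x in Set.Ioc (0:ℝ) q, cdf' P x = (∫⁻ u in Set.Ioc (0:ℝ) q, P (Set.Iic u)).toReal := by
    unfold cdf'
    rw [integral_toReal]
    · apply Measurable.aemeasurable
      exact (Monotone.measurable (fun a b hab => measure_mono (Set.Iic_subset_Iic.mpr hab)))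
    · filter_upwards with u
      exact lt_of_le_of_lt prob_le_one (by norm_num)
  have hGint : ∫ x, (G x).toReal ∂P = (∫⁻ x, G x ∂P).toReal := by
    rw [integral_toReal hGmeas.aemeasurable]
    filter_upwards with x
    exact lt_of_le_of_lt (hGfin x) (by simp)
  calc ∫ x, (rho τ (x - q) - rho τ x) ∂P
      = ∫ x, (-(τ * q) + (G x).toReal) ∂P := by
        apply integral_congr_ae; filter_upwards with x; exact hpt x
    _ = -(τ * q) + ∫ x, (G x).toReal ∂P := by
        rw [integral_add (integrable_const _) hint, integral_const]
        simp
    _ = -τ * q + ∫ x in Set.Ioc (0:ℝ) q, cdf' P x := by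
        rw [hGint, hswap, hcdf]; ring_nf
end

section
/- Let P be a probability measure on ℝ, τ ∈ (0,1), and q < 0. Then ∫_ℝ (ρ_τ(x - q) - ρ_τ(x)) dP(x) = -τ·q - ∫_{(q,0]} F(x) dx, where F is the CDF of P. -/
open MeasureTheory

/-!
For `q < 0`, `ρ_τ(x - q) - ρ_τ(x) = -τ q + min (max q x) 0`, and `-min (max q x) 0` is the
length of `(q, 0] ∩ [x, ∞)`. Integrating this length against `P` and swapping the order of
integration over `{(t, x) | x ≤ t}` (Tonelli) gives `∫_{(q, 0]} F`.
-/

open Set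

lemma lintegral_measure_Iic_eq_lintegral_measure_Ici (μ ν : Measure ℝ) [SFinite μ] [SFinite ν] :
    ∫⁻ t, μ (Iic t) ∂ν = ∫⁻ x, ν (Ici x) ∂μ := by
  have hs : MeasurableSet {p : ℝ × ℝ | p.2 ≤ p.1} := measurableSet_le measurable_snd measurable_fst
  calc ∫⁻ t, μ (Iic t) ∂ν = (ν.prod μ) {p | p.2 ≤ p.1} := (Measure.prod_apply hs).symm
    _ = ∫⁻ x, ν (Ici x) ∂μ := Measure.prod_apply_symm hs

lemma volume_restrict_Ioc_Ici (a b x : ℝ) :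
    volume.restrict (Ioc a b) (Ici x) = ENNReal.ofReal (b - max a x) := by
  rw [← measure_congr (ae_restrict_le Ioi_ae_eq_Ici), Measure.restrict_apply measurableSet_Ioi,
    inter_comm, Ioc_inter_Ioi, Real.volume_Ioc]

lemma setIntegral_cdf'_Ioc (P : Measure ℝ) [IsFiniteMeasure P] (a b : ℝ) :
    ∫ t in Ioc a b, cdf' P t = ∫ x, max (b - max a x) 0 ∂P := by
  have hcdf : Monotone fun t ↦ P (Iic t) := fun _ _ h ↦ measure_mono (Iic_subset_Iic.2 h)
  have hvol : Antitone fun x ↦ volume.restrict (Ioc a b) (Ici x) :=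
    fun _ _ h ↦ measure_mono (Ici_subset_Ici.2 h)
  simp_rw [cdf', ← ENNReal.toReal_ofReal', ← volume_restrict_Ioc_Ici]
  rw [integral_toReal hcdf.measurable.aemeasurable (ae_of_all _ fun _ ↦ measure_lt_top _ _),
    integral_toReal hvol.measurable.aemeasurable (ae_of_all _ fun _ ↦ measure_lt_top _ _),
    lintegral_measure_Iic_eq_lintegral_measure_Ici]

lemma rho_sub_rho_of_neg (τ : ℝ) {q : ℝ} (hq : q < 0) (x : ℝ) :
    rho τ (x - q) - rho τ x = -τ * q + min (max q x) 0 := by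
  unfold rho
  rcases le_or_gt x q with hxq | hqx
  · rw [if_pos (by linarith), if_pos (by linarith), max_eq_left hxq, min_eq_left hq.le]; ring
  · rw [if_neg (by linarith), max_eq_right hqx.le]
    rcases le_or_gt x 0 with hx | hx
    · rw [if_pos hx, min_eq_left hx]; ring
    · rw [if_neg hx.not_ge, min_eq_right hx.le]; ring

theorem stmt8_general (P : Measure ℝ) [IsProbabilityMeasure P] (τ : ℝ)
    (q : ℝ) (hq : q < 0) :
    ∫ x, (rho τ (x - q) - rho τ x) ∂P = -τ * q - ∫ x in Set.Ioc q (0:ℝ), cdf' P x := by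
  have hclamp : Integrable (fun x ↦ min (max q x) 0) P := by
    refine Integrable.of_bound (by fun_prop) (-q) (ae_of_all _ fun x ↦ ?_)
    rw [Real.norm_eq_abs, abs_le]
    constructor <;> simp [hq.le]
  calc ∫ x, (rho τ (x - q) - rho τ x) ∂P = ∫ x, (-τ * q + min (max q x) 0) ∂P := by
        simp_rw [rho_sub_rho_of_neg τ hq]
    _ = -τ * q + ∫ x, min (max q x) 0 ∂P := by
        rw [integral_add (integrable_const _) hclamp, integral_const, probReal_univ, one_smul]
    _ = -τ * q - ∫ x, max (0 - max q x) 0 ∂P := by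
        have hneg (x : ℝ) : max (0 - max q x) 0 = -min (max q x) 0 := by
          rw [← max_neg_neg, neg_zero, zero_sub]
        simp_rw [hneg, integral_neg, sub_neg_eq_add]
    _ = -τ * q - ∫ x in Ioc q 0, cdf' P x := by rw [setIntegral_cdf'_Ioc]

theorem stmt8 (P : Measure ℝ) [IsProbabilityMeasure P] (τ : ℝ) (hτ : τ ∈ Set.Ioo (0:ℝ) 1)
    (q : ℝ) (hq : q < 0) :
    ∫ x, (rho τ (x - q) - rho τ x) ∂P = -τ * q - ∫ x in Set.Ioc q (0:ℝ), cdf' P x :=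
  stmt8_general P τ q hq
end

section
/- Let P be a probability measure on ℝ with CDF F and primitive 𝐅 (vanishing at 0), and let τ ∈ (0,1). Then for every q ∈ ℝ, Φ(q) := ∫_ℝ (ρ_τ(x - q) - ρ_τ(x)) dP(x) equals 𝐅(q) - τ·q. -/
/-!
Pointwise, `ρ_τ(x - q) - ρ_τ(x) = (q - x)⁺ - (-x)⁺ - τ q`, and for `a ≤ b` the difference
`(b - x)⁺ - (a - x)⁺` is the length of `[x, ∞) ∩ (a, b]`, i.e. `∫_a^b 1{x ≤ u} du`.
Integrating in `x` against `P` and swapping the integrals (Fubini) turns `1{x ≤ u}` into `F(u)`.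
-/

open MeasureTheory

lemma rho_sub_sub_rho_sub (τ a b x : ℝ) :
    rho τ (x - b) - rho τ (x - a) = max (b - x) 0 - max (a - x) 0 - τ * (b - a) := by
  simp only [rho, max_def]
  split_ifs <;> linarith

lemma volume_real_Ici_inter_Ioc {a b : ℝ} (hab : a ≤ b) (x : ℝ) :
    volume.real (Set.Ici x ∩ Set.Ioc a b) = max (b - x) 0 - max (a - x) 0 := by
  rcases le_or_gt x a with hxa | hax
  · have hsub : Set.Ioc a b ⊆ Set.Ici x := fun u hu => hxa.trans hu.1.le
    rw [Set.inter_eq_right.2 hsub,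
      Real.volume_real_Ioc_of_le hab, max_eq_left (by linarith), max_eq_left (by linarith)]
    ring
  · have : Set.Ici x ∩ Set.Ioc a b = Set.Icc x b := by
      ext u
      simp only [Set.mem_inter_iff, Set.mem_Ioc, Set.mem_Ici, Set.mem_Icc]
      constructor
      · rintro ⟨hxu, -, hub⟩; exact ⟨hxu, hub⟩
      · rintro ⟨hxu, hub⟩; exact ⟨hxu, hax.trans_le hxu, hub⟩
    rw [this, Real.volume_real_Icc, max_eq_right (a := a - x) (by linarith), sub_zero]

lemma integrable_max_sub_sub_max_sub (P : Measure ℝ) [IsFiniteMeasure P] (a b : ℝ) :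
    Integrable (fun x => max (b - x) 0 - max (a - x) 0) P := by
  refine Integrable.mono' (integrable_const |b - a|) (by fun_prop) (.of_forall fun x => ?_)
  calc ‖max (b - x) 0 - max (a - x) 0‖ ≤ max |b - x - (a - x)| |0 - 0| :=
        abs_max_sub_max_le_max _ _ _ _
    _ = |b - a| := by simp

lemma integral_max_sub_sub_max_sub_of_le (P : Measure ℝ) [IsFiniteMeasure P] {a b : ℝ}
    (hab : a ≤ b) :
    ∫ x, (max (b - x) 0 - max (a - x) 0) ∂P = ∫ u in Set.Ioc a b, cdf' P u := by
  have hint : Integrable (Function.uncurry fun x u => (Set.Ici x).indicator (1 : ℝ → ℝ) u)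
      (P.prod (volume.restrict (Set.Ioc a b))) :=
    (integrable_const 1).indicator (measurableSet_le measurable_fst measurable_snd)
  have hswap := integral_integral_swap hint
  have hsection : ∀ u, (fun x => (Set.Ici x).indicator (1 : ℝ → ℝ) u) = (Set.Iic u).indicator 1 :=
    fun u => funext fun x => by simp [Set.indicator_apply]
  simp_rw [integral_indicator_one measurableSet_Ici, measureReal_restrict_apply measurableSet_Ici,
    volume_real_Ici_inter_Ioc hab, hsection, integral_indicator_one measurableSet_Iic] at hswap
  simpa only [cdf', measureReal_def] using hswap

lemma integral_max_sub_sub_max_sub (P : Measure ℝ) [IsFiniteMeasure P] (a b : ℝ) :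
    ∫ x, (max (b - x) 0 - max (a - x) 0) ∂P = ∫ u in a..b, cdf' P u := by
  rcases le_total a b with hab | hba
  · rw [integral_max_sub_sub_max_sub_of_le P hab, intervalIntegral.integral_of_le hab]
  · rw [intervalIntegral.integral_symm, intervalIntegral.integral_of_le hba,
      ← integral_max_sub_sub_max_sub_of_le P hba, ← integral_neg]
    simp only [neg_sub]

theorem stmt9_general (P : Measure ℝ) [IsProbabilityMeasure P] (τ : ℝ)
    (q : ℝ) :
    ∫ x, (rho τ (x - q) - rho τ x) ∂P = primF P q - τ * q := by
  have hrho : ∀ x, rho τ (x - q) - rho τ x = max (q - x) 0 - max (0 - x) 0 - τ * q := by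
    simpa using rho_sub_sub_rho_sub τ 0 q
  simp_rw [hrho]
  rw [integral_sub (integrable_max_sub_sub_max_sub P 0 q) (integrable_const _),
    integral_max_sub_sub_max_sub, integral_const, primF]
  simp

theorem stmt9 (P : Measure ℝ) [IsProbabilityMeasure P] (τ : ℝ) (hτ : τ ∈ Set.Ioo (0:ℝ) 1)
    (q : ℝ) :
    ∫ x, (rho τ (x - q) - rho τ x) ∂P = primF P q - τ * q :=
  stmt9_general P τ q
end

section
/- Let P be a probability measure on ℝ, τ ∈ (0,1), and Φ(q) = ∫_ℝ (ρ_τ(x - q) - ρ_τ(x)) dP(x). Then Φ(q) → +∞ as |q| → +∞ (Φ is coercive). -/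
/-!
Dominated convergence: since `ρ_τ` is `1`-Lipschitz, `(ρ_τ(x - q) - ρ_τ(x)) / |q|` is bounded
by `1` and tends pointwise to `1 - τ` as `q → +∞` and to `τ` as `q → -∞`. Hence `Φ(q) / |q|`
tends to a positive constant along either end of `ℝ`, so `Φ(q) → +∞`.
-/

open MeasureTheory Filter Topology

lemma rho_of_nonpos {τ x : ℝ} (hx : x ≤ 0) : rho τ x = (τ - 1) * x := if_pos hx

lemma rho_of_pos {τ x : ℝ} (hx : 0 < x) : rho τ x = τ * x := if_neg hx.not_ge

lemma rho_eq_max (τ x : ℝ) : rho τ x = max ((τ - 1) * x) (τ * x) := by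
  rcases le_or_gt x 0 with hx | hx
  · rw [rho_of_nonpos hx, max_eq_left (by nlinarith)]
  · rw [rho_of_pos hx, max_eq_right (by nlinarith)]

@[fun_prop]
lemma continuous_rho (τ : ℝ) : Continuous (rho τ) := by
  rw [funext (rho_eq_max τ)]
  fun_prop

lemma abs_rho_sub_rho_le {τ : ℝ} (hτ0 : 0 ≤ τ) (hτ1 : τ ≤ 1) (a b : ℝ) :
    |rho τ a - rho τ b| ≤ |a - b| := by
  have hslope : ∀ c : ℝ, |c| ≤ 1 → |c * a - c * b| ≤ |a - b| := fun c hc => by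
    rw [← mul_sub, abs_mul]
    exact mul_le_of_le_one_left (abs_nonneg _) hc
  rw [rho_eq_max, rho_eq_max]
  refine (abs_max_sub_max_le_max _ _ _ _).trans (max_le (hslope _ ?_) (hslope _ ?_)) <;>
    rw [abs_le] <;> constructor <;> linarith

lemma tendsto_rho_sub_rho_div_abs_atTop (τ x : ℝ) :
    Tendsto (fun q => (rho τ (x - q) - rho τ x) / |q|) atTop (𝓝 (1 - τ)) := by
  have hlim : Tendsto (fun q => 1 - τ + ((τ - 1) * x - rho τ x) / q) atTop (𝓝 (1 - τ)) := by
    simpa using (tendsto_const_nhds.div_atTop tendsto_id).const_add (1 - τ)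
  refine hlim.congr' ?_
  filter_upwards [eventually_gt_atTop (max x 0)] with q hq
  have hq0 : 0 < q := (le_max_right x 0).trans_lt hq
  have hxq : x - q ≤ 0 := by linarith [le_max_left x 0]
  rw [abs_of_pos hq0, rho_of_nonpos hxq]
  field_simp
  ring

lemma tendsto_rho_sub_rho_div_abs_atBot (τ x : ℝ) :
    Tendsto (fun q => (rho τ (x - q) - rho τ x) / |q|) atBot (𝓝 τ) := by
  have hlim : Tendsto (fun q => τ + (τ * x - rho τ x) / -q) atBot (𝓝 τ) := by
    simpa using (tendsto_const_nhds.div_atTop tendsto_neg_atBot_atTop).const_add τ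
  refine hlim.congr' ?_
  filter_upwards [eventually_lt_atBot (min x 0)] with q hq
  have hq0 : q < 0 := hq.trans_le (min_le_right x 0)
  have hxq : 0 < x - q := by linarith [min_le_left x 0]
  rw [abs_of_neg hq0, rho_of_pos hxq]
  field_simp [hq0.ne]
  ring

lemma tendsto_integral_div_abs_of_abs_le {α : Type*} [MeasurableSpace α] {μ : Measure α}
    [IsProbabilityMeasure μ] {l : Filter ℝ} [l.IsCountablyGenerated] {F : ℝ → α → ℝ} {c : ℝ}
    (hF_meas : ∀ q, AEStronglyMeasurable (F q) μ) (hF_le : ∀ q x, |F q x| ≤ |q|)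
    (hF_lim : ∀ᵐ x ∂μ, Tendsto (fun q => F q x / |q|) l (𝓝 c)) :
    Tendsto (fun q => (∫ x, F q x ∂μ) / |q|) l (𝓝 c) := by
  have hbound : ∀ q x, ‖F q x / |q|‖ ≤ 1 := fun q x => by
    rw [Real.norm_eq_abs, abs_div, abs_abs]
    exact div_le_one_of_le₀ (hF_le q x) (abs_nonneg q)
  simp_rw [← integral_div]
  simpa [div_eq_mul_inv] using tendsto_integral_filter_of_dominated_convergence (fun _ => 1)
    (.of_forall fun q => (hF_meas q).mul_const |q|⁻¹) (.of_forall fun q => ae_of_all _ (hbound q))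
    (integrable_const 1) hF_lim

lemma tendsto_atTop_of_tendsto_div_abs {l : Filter ℝ} {f : ℝ → ℝ} {c : ℝ} (hc : 0 < c)
    (hl : Tendsto (fun q => |q|) l atTop) (hf : Tendsto (fun q => f q / |q|) l (𝓝 c)) :
    Tendsto f l atTop := by
  refine (hl.atTop_mul_pos hc hf).congr' ?_
  filter_upwards [hl.eventually_gt_atTop 0] with q hq
  field_simp

lemma tendsto_integral_rho_sub_rho {P : Measure ℝ} [IsProbabilityMeasure P] {τ : ℝ}
    (hτ0 : 0 ≤ τ) (hτ1 : τ ≤ 1) {l : Filter ℝ} [l.IsCountablyGenerated] {c : ℝ} (hc : 0 < c)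
    (hl : Tendsto (fun q => |q|) l atTop)
    (hlim : ∀ x, Tendsto (fun q => (rho τ (x - q) - rho τ x) / |q|) l (𝓝 c)) :
    Tendsto (fun q => ∫ x, (rho τ (x - q) - rho τ x) ∂P) l atTop := by
  refine tendsto_atTop_of_tendsto_div_abs hc hl
    (tendsto_integral_div_abs_of_abs_le (fun q => ?_) (fun q x => ?_) (ae_of_all _ hlim))
  · exact (by fun_prop : Continuous fun x => rho τ (x - q) - rho τ x).aestronglyMeasurable
  · simpa using abs_rho_sub_rho_le hτ0 hτ1 (x - q) x

theorem stmt11 (P : Measure ℝ) [IsProbabilityMeasure P] (τ : ℝ) (hτ : τ ∈ Set.Ioo (0:ℝ) 1) :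
    Filter.Tendsto (fun q : ℝ => ∫ x, (rho τ (x - q) - rho τ x) ∂P)
      (Filter.cocompact ℝ) Filter.atTop := by
  obtain ⟨hτ0, hτ1⟩ := hτ
  rw [cocompact_eq_atBot_atTop, tendsto_sup]
  exact ⟨tendsto_integral_rho_sub_rho hτ0.le hτ1.le hτ0 tendsto_abs_atBot_atTop
      (tendsto_rho_sub_rho_div_abs_atBot τ),
    tendsto_integral_rho_sub_rho hτ0.le hτ1.le (sub_pos.2 hτ1) tendsto_abs_atTop_atTop
      (tendsto_rho_sub_rho_div_abs_atTop τ)⟩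
end

section
/- Let P be a probability measure on ℝ with CDF F and F⁻ its left-continuous version, τ ∈ (0,1), and 𝐅 the primitive of F vanishing at 0. Then q̄ minimizes q ↦ 𝐅(q) - τ·q over ℝ if and only if F⁻(q̄) ≤ τ ≤ F(q̄), i.e., q̄ is a τ-quantile of P. -/
/-!
`q ↦ 𝐅(q) - τ q` is the primitive of the nondecreasing function `F - τ`, so it is minimal at `q̄`
exactly when `F - τ ≤ 0` to the left of `q̄` and `F - τ ≥ 0` to the right of it. Since `F⁻` is the
left limit of `F` and `F` is right-continuous, these two conditions say `F⁻(q̄) ≤ τ ≤ F(q̄)`.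
-/

open MeasureTheory

open Set Filter Topology Function ProbabilityTheory intervalIntegral

namespace Monotone

section Primitive

variable {f : ℝ → ℝ}

theorem mul_le_intervalIntegral (hf : Monotone f) {a b : ℝ} (hab : a ≤ b) :
    (b - a) * f a ≤ ∫ u in a..b, f u := by
  simpa [mul_comm] using integral_mono_on (μ := volume) hab intervalIntegrable_const
    hf.intervalIntegrable fun _ hx ↦ hf hx.1

theorem intervalIntegral_le_mul (hf : Monotone f) {a b : ℝ} (hab : a ≤ b) :
    ∫ u in a..b, f u ≤ (b - a) * f b := by
  simpa [mul_comm] using integral_mono_on (μ := volume) hab hf.intervalIntegrable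
    intervalIntegrable_const fun _ hx ↦ hf hx.2

theorem forall_intervalIntegral_nonneg_iff (hf : Monotone f) (b : ℝ) :
    (∀ x, 0 ≤ ∫ u in b..x, f u) ↔ (∀ x < b, f x ≤ 0) ∧ ∀ x, b < x → 0 ≤ f x := by
  constructor
  · intro h
    refine ⟨fun x hx ↦ ?_, fun x hx ↦ ?_⟩
    · have hint : ∫ u in x..b, f u ≤ 0 := by simpa [integral_symm x b] using h x
      exact nonpos_of_mul_nonpos_right ((hf.mul_le_intervalIntegral hx.le).trans hint)
        (sub_pos.2 hx)
    · exact nonneg_of_mul_nonneg_right ((h x).trans (hf.intervalIntegral_le_mul hx.le))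
        (sub_pos.2 hx)
  · rintro ⟨hleft, hright⟩ x
    rcases le_total b x with hbx | hxb
    · simpa using integral_mono_on_of_le_Ioo hbx intervalIntegrable_const hf.intervalIntegrable
        fun u hu ↦ hright u hu.1
    · rw [integral_symm, neg_nonneg]
      simpa using integral_mono_on_of_le_Ioo hxb hf.intervalIntegrable intervalIntegrable_const
        fun u hu ↦ hleft u hu.2

theorem isMinOn_primitive_iff (hf : Monotone f) (a b : ℝ) :
    IsMinOn (fun x ↦ ∫ u in a..x, f u) univ b ↔
      (∀ x < b, f x ≤ 0) ∧ ∀ x, b < x → 0 ≤ f x := by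
  rw [isMinOn_univ_iff, ← hf.forall_intervalIntegral_nonneg_iff]
  refine forall_congr' fun x ↦ ?_
  rw [← sub_nonneg, integral_interval_sub_left hf.intervalIntegrable hf.intervalIntegrable]

end Primitive

theorem leftLim_le_iff {α β : Type*} [LinearOrder α] [TopologicalSpace α] [OrderTopology α]
    [ConditionallyCompleteLinearOrder β] [TopologicalSpace β] [OrderTopology β] {f : α → β}
    (hf : Monotone f) {b : α} [(𝓝[<] b).NeBot] {c : β} :
    leftLim f b ≤ c ↔ ∀ x < b, f x ≤ c :=
  ⟨fun h _ hx ↦ (hf.le_leftLim hx).trans h,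
    fun h ↦ _root_.le_of_tendsto (hf.tendsto_leftLim b) (eventually_nhdsWithin_of_forall h)⟩

end Monotone

theorem StieltjesFunction.le_apply_iff {R : Type*} [LinearOrder R] [TopologicalSpace R]
    (f : StieltjesFunction R) {b : R} [(𝓝[>] b).NeBot] {c : ℝ} :
    c ≤ f b ↔ ∀ x, b < x → c ≤ f x :=
  ⟨fun h _ hx ↦ h.trans (f.mono hx.le),
    fun h ↦ ge_of_tendsto ((f.right_continuous b).mono Ioi_subset_Ici_self).tendsto
      (eventually_nhdsWithin_of_forall h)⟩

theorem ProbabilityTheory.measureReal_Iio_eq_leftLim_cdf (μ : Measure ℝ) [IsProbabilityMeasure μ]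
    (x : ℝ) : μ.real (Iio x) = leftLim (cdf μ) x := by
  have hnonneg : 0 ≤ leftLim (cdf μ) x :=
    (cdf_nonneg μ (x - 1)).trans ((monotone_cdf μ).le_leftLim (sub_one_lt x))
  conv_lhs => rw [← measure_cdf μ]
  rw [measureReal_def, (cdf μ).measure_Iio (tendsto_cdf_atBot μ), sub_zero,
    ENNReal.toReal_ofReal hnonneg]

theorem primF_sub_mul_eq_integral (P : Measure ℝ) [IsProbabilityMeasure P] (τ x : ℝ) :
    primF P x - τ * x = ∫ u in 0..x, (cdf P u - τ) := by
  have hF : cdf' P = cdf P := funext fun u ↦ (cdf_eq_real P u).symm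
  rw [integral_sub (monotone_cdf P).intervalIntegrable intervalIntegrable_const,
    intervalIntegral.integral_const, primF, hF, smul_eq_mul, sub_zero, mul_comm]

theorem stmt13_general (P : Measure ℝ) [IsProbabilityMeasure P] (τ : ℝ)
    (qbar : ℝ) :
    (∀ q : ℝ, primF P qbar - τ * qbar ≤ primF P q - τ * q) ↔
      ((P (Set.Iio qbar)).toReal ≤ τ ∧ τ ≤ (P (Set.Iic qbar)).toReal) := by
  have hmono : Monotone fun u ↦ cdf P u - τ := fun _ _ h ↦ sub_le_sub_right (monotone_cdf P h) τ
  have hmin := hmono.isMinOn_primitive_iff 0 qbar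
  simp only [isMinOn_univ_iff] at hmin
  simp_rw [primF_sub_mul_eq_integral, hmin, sub_nonpos, sub_nonneg,
    ← (monotone_cdf P).leftLim_le_iff, ← (cdf P).le_apply_iff, ← measureReal_def,
    measureReal_Iio_eq_leftLim_cdf, cdf_eq_real]

theorem stmt13 (P : Measure ℝ) [IsProbabilityMeasure P] (τ : ℝ) (hτ : τ ∈ Set.Ioo (0:ℝ) 1)
    (qbar : ℝ) :
    (∀ q : ℝ, primF P qbar - τ * qbar ≤ primF P q - τ * q) ↔
      ((P (Set.Iio qbar)).toReal ≤ τ ∧ τ ≤ (P (Set.Iic qbar)).toReal) :=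
  stmt13_general P τ qbar
end
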